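/- If C is a monoidal model category in which every object is cofibrant, then the monoid axiom is a consequence of the pushout product axiom. -/

import Mathlib

open CategoryTheory CategoryTheory.Limits CategoryTheory.MonoidalCategory

universe v u

namespace Paper

variable {C : Type u} [Category.{v} C]

/-- `f` is a retract of `g` (in the arrow category). -/
def IsRetract {X Y X' Y' : C} (f : X ⟶ Y) (g : X' ⟶ Y') : Prop :=
  ∃ (i : Arrow.mk f ⟶ Arrow.mk g) (r : Arrow.mk g ⟶ Arrow.mk f), i ≫ r = 𝟙 _

/-- The morphism class determined by a family of maps. -/
def OfFamily {ι : Type*} {A B : ι → C} (g : ∀ i, A i ⟶ B i) : MorphismProperty C :=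
  fun _ _ f => ∃ i, Nonempty (Arrow.mk f ≅ Arrow.mk (g i))

/-- Cobase changes (pushouts) of maps in `S`. -/
def Pushouts (S : MorphismProperty C) : MorphismProperty C :=
  fun A B f => ∃ (X Y : C) (g : X ⟶ Y) (h : X ⟶ A) (k : Y ⟶ B), S g ∧ IsPushout h g f k

/-- The inclusion functor of the initial segment below `b`. -/
def segIncl {γ : Type v} [Preorder γ] (b : γ) : {a : γ // a < b} ⥤ γ :=
  Monotone.functor (f := fun a => a.1) (fun _ _ h => h)

/-- The cocone over the restriction of `F` to the segment below `b`, with point `F.obj b`. -/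
def segCocone {γ : Type v} [Preorder γ] (F : γ ⥤ C) (b : γ) : Cocone (segIncl b ⋙ F) where
  pt := F.obj b
  ι :=
    { app := fun a => F.map (homOfLE a.2.le)
      naturality := by
        intro a a' h
        dsimp [segIncl]
        rw [← F.map_comp, Category.comp_id]
        exact congrArg F.map (Subsingleton.elim _ _) }

/-- `F` is continuous at limit stages: at each limit element `b` the value `F.obj b`
is the colimit of the preceding values. -/
def IsContinuousSeq {γ : Type v} [Preorder γ] (F : γ ⥤ C) : Prop :=
  ∀ b : γ, Order.IsSuccLimit b → Nonempty (IsColimit (segCocone F b))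

/-- `f` is a transfinite composition of maps in `S`. -/
def IsTransfiniteCompositionOf (S : MorphismProperty C) {X Y : C} (f : X ⟶ Y) : Prop :=
  ∃ (γ : Type v) (_ : LinearOrder γ) (_ : WellFoundedLT γ) (_ : OrderBot γ) (_ : SuccOrder γ)
    (F : γ ⥤ C) (c : Cocone F) (_ : IsColimit c) (e : X ≅ F.obj ⊥) (e' : c.pt ≅ Y),
      (∀ b : γ, ¬ IsMax b → S (F.map (homOfLE (Order.le_succ b)))) ∧
      IsContinuousSeq F ∧ f = e.hom ≫ c.ι.app ⊥ ≫ e'.hom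

/-- The regular `S`-cofibrations: transfinite compositions of cobase changes of maps in `S`. -/
def cofReg (S : MorphismProperty C) : MorphismProperty C :=
  fun _ _ f => IsTransfiniteCompositionOf (Pushouts S) f

/-- Left lifting property with respect to a class. -/
def llp (S : MorphismProperty C) : MorphismProperty C :=
  fun _ _ f => ∀ ⦃X Y : C⦄ (p : X ⟶ Y), S p → HasLiftingProperty f p

/-- Right lifting property with respect to a family. -/
def rlpF {ι : Type*} {A B : ι → C} (g : ∀ i, A i ⟶ B i) : MorphismProperty C :=
  fun _ _ f => ∀ i, HasLiftingProperty (g i) f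

/-- `A` is small relative to the class `S` (in the sense of DHK):
for some regular cardinal `κ`, `Hom(A, -)` commutes with colimits of `λ`-sequences of
maps in `S`, for all regular `λ ≥ κ`. -/
def IsSmallRelTo (S : MorphismProperty C) (A : C) : Prop :=
  ∃ κ : Cardinal.{v}, κ.IsRegular ∧
    ∀ (γ : Type v) (_ : LinearOrder γ) (_ : WellFoundedLT γ) (_ : OrderBot γ) (_ : SuccOrder γ),
      κ ≤ Cardinal.mk γ → (Cardinal.mk γ).IsRegular →
      (∀ b : γ, Cardinal.mk {a : γ // a < b} < Cardinal.mk γ) →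
      ∀ (F : γ ⥤ C), (∀ b : γ, ¬ IsMax b → S (F.map (homOfLE (Order.le_succ b)))) →
        IsContinuousSeq F →
        ∀ (c : Cocone F), IsColimit c →
          (∀ g : A ⟶ c.pt, ∃ (b : γ) (h : A ⟶ F.obj b), h ≫ c.ι.app b = g) ∧
          (∀ (b b' : γ) (h : A ⟶ F.obj b) (h' : A ⟶ F.obj b'),
            h ≫ c.ι.app b = h' ≫ c.ι.app b' →
            ∃ (b'' : γ) (l : b ≤ b'') (l' : b' ≤ b''),
              h ≫ F.map (homOfLE l) = h' ≫ F.map (homOfLE l'))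

/-- A model structure: classes of weak equivalences, cofibrations and fibrations
satisfying (MC2)-(MC5). -/
structure ModelStruct (C : Type u) [Category.{v} C] where
  W : MorphismProperty C
  Cof : MorphismProperty C
  Fib : MorphismProperty C
  comp_W : ∀ {X Y Z : C} (f : X ⟶ Y) (g : Y ⟶ Z), W f → W g → W (f ≫ g)
  two_of_three_left : ∀ {X Y Z : C} (f : X ⟶ Y) (g : Y ⟶ Z), W (f ≫ g) → W g → W f
  two_of_three_right : ∀ {X Y Z : C} (f : X ⟶ Y) (g : Y ⟶ Z), W (f ≫ g) → W f → W g
  retract_W : ∀ {X Y X' Y' : C} (f : X ⟶ Y) (g : X' ⟶ Y'), IsRetract f g → W g → W f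
  retract_Cof : ∀ {X Y X' Y' : C} (f : X ⟶ Y) (g : X' ⟶ Y'), IsRetract f g → Cof g → Cof f
  retract_Fib : ∀ {X Y X' Y' : C} (f : X ⟶ Y) (g : X' ⟶ Y'), IsRetract f g → Fib g → Fib f
  lift_c_af : ∀ {A B X Y : C} (i : A ⟶ B) (p : X ⟶ Y), Cof i → Fib p → W p →
    HasLiftingProperty i p
  lift_ac_f : ∀ {A B X Y : C} (i : A ⟶ B) (p : X ⟶ Y), Cof i → W i → Fib p →
    HasLiftingProperty i p
  factor_c_af : ∀ {X Y : C} (f : X ⟶ Y), ∃ (Z : C) (i : X ⟶ Z) (p : Z ⟶ Y),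
    Cof i ∧ Fib p ∧ W p ∧ i ≫ p = f
  factor_ac_f : ∀ {X Y : C} (f : X ⟶ Y), ∃ (Z : C) (i : X ⟶ Z) (p : Z ⟶ Y),
    Cof i ∧ W i ∧ Fib p ∧ i ≫ p = f

/-- The acyclic cofibrations of a model structure. -/
def acof (M : ModelStruct C) : MorphismProperty C := fun _ _ f => M.Cof f ∧ M.W f

/-- Cofibrant generation data for a model structure: generating sets `I`, `J` with
the right lifting characterizations of (acyclic) fibrations and the smallness conditions. -/
structure CofGen (M : ModelStruct C) where
  ιI : Type v
  srcI : ιI → C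
  tgtI : ιI → C
  genI : ∀ i, srcI i ⟶ tgtI i
  ιJ : Type v
  srcJ : ιJ → C
  tgtJ : ιJ → C
  genJ : ∀ j, srcJ j ⟶ tgtJ j
  genI_cof : ∀ i, M.Cof (genI i)
  genJ_acof : ∀ j, acof M (genJ j)
  fib_iff : ∀ {X Y : C} (f : X ⟶ Y), M.Fib f ↔ ∀ j, HasLiftingProperty (genJ j) f
  acfib_iff : ∀ {X Y : C} (f : X ⟶ Y), (M.Fib f ∧ M.W f) ↔ ∀ i, HasLiftingProperty (genI i) f
  smallI : ∀ i, IsSmallRelTo (cofReg (OfFamily genI)) (srcI i)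
  smallJ : ∀ j, IsSmallRelTo (cofReg (OfFamily genJ)) (srcJ j)

section Monoidal

variable [MonoidalCategory C]

/-- The pushout product of `i` and `j`. -/
noncomputable def ppt [HasPushouts C] {A B K L : C} (i : A ⟶ B) (j : K ⟶ L) :
    pushout (A ◁ j) (i ▷ K) ⟶ B ⊗ L :=
  pushout.desc (i ▷ L) (B ◁ j) (whisker_exchange i j)

/-- The pushout product axiom. -/
def PushoutProductAxiom [HasPushouts C] (M : ModelStruct C) : Prop :=
  ∀ {A B K L : C} (i : A ⟶ B) (j : K ⟶ L), M.Cof i → M.Cof j →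
    M.Cof (ppt i j) ∧ (M.W i → M.W (ppt i j)) ∧ (M.W j → M.W (ppt i j))

/-- The class `S ∧ C` of maps of the form `g ▷ Z` with `g ∈ S`. -/
def smashAll (S : MorphismProperty C) : MorphismProperty C :=
  fun A' B' f => ∃ (X Y Z : C) (g : X ⟶ Y), S g ∧
    ∃ (eA : X ⊗ Z ≅ A') (eB : Y ⊗ Z ≅ B'), f = eA.inv ≫ (g ▷ Z) ≫ eB.hom

/-- The monoid axiom: every map in `({acyclic cofibrations} ∧ C)-cof_reg`
is a weak equivalence. -/
def MonoidAxiom [HasPushouts C] (M : ModelStruct C) : Prop :=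
  ∀ {X Y : C} (f : X ⟶ Y), cofReg (smashAll (acof M)) f → M.W f

end Monoidal

end Paper

/-!
If every object is cofibrant, then for an acyclic cofibration `g : X ⟶ Y` the map `g ▷ Z` is
the pushout product of `g` with the cofibration `⊥ ⟶ Z`: since `X ⊗ -` is a left adjoint,
`X ⊗ ⊥` and `Y ⊗ ⊥` are initial. So `g ▷ Z` is an acyclic cofibration and has the left lifting
property against all fibrations. That property is stable under pushouts and transfinite
compositions, so every map of `({acyclic cofibrations} ∧ C)-cof_reg` has it, and by the retract
argument such a map is an acyclic cofibration, in particular a weak equivalence.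
-/

namespace Paper

variable {C : Type u} [Category.{v} C]

lemma isRetract_of_arrowIso {X Y X' Y' : C} {f : X ⟶ Y} {g : X' ⟶ Y'}
    (e : Arrow.mk f ≅ Arrow.mk g) : IsRetract f g :=
  ⟨e.hom, e.inv, e.hom_inv_id⟩

lemma acof_of_arrowIso (M : ModelStruct C) {X Y X' Y' : C} {f : X ⟶ Y} {g : X' ⟶ Y'}
    (e : Arrow.mk f ≅ Arrow.mk g) (hg : acof M g) : acof M f :=
  ⟨M.retract_Cof f g (isRetract_of_arrowIso e) hg.1,
    M.retract_W f g (isRetract_of_arrowIso e) hg.2⟩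

/-- The retract argument: factor `f = p ∘ i` with `i` an acyclic cofibration and `p` a fibration;
lifting in the square `(i, 𝟙)` exhibits `f` as a retract of `i`. -/
lemma acof_of_llp_fib (M : ModelStruct C) {X Y : C} (f : X ⟶ Y) (hf : M.Fib.llp f) :
    acof M f := by
  obtain ⟨Z, i, p, hi, hwi, hp, hfac⟩ := M.factor_ac_f f
  have := hf p hp
  have sq : CommSq i f p (𝟙 Y) := ⟨by rw [hfac, Category.comp_id]⟩
  have hret : IsRetract f i :=
    ⟨Arrow.homMk' (u := 𝟙 X) (v := sq.lift) (by simp),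
      Arrow.homMk' (u := 𝟙 X) (v := p) (by simp [hfac]),
      by ext <;> simp⟩
  exact ⟨M.retract_Cof f i hret hi, M.retract_W f i hret hwi⟩

lemma pushouts_le_llp {S T : MorphismProperty C} (h : S ≤ T.llp) : Pushouts S ≤ T.llp := by
  rintro _ _ _ ⟨_, _, g, _, _, hg, po⟩
  exact T.llp.of_isPushout po (h g hg)

lemma cofReg_le_llp {S T : MorphismProperty C} (h : S ≤ T.llp) : cofReg S ≤ T.llp := by
  rintro _ _ _ ⟨γ, _, _, _, _, F, c, hc, e, e', hsucc, hcont, rfl⟩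
  have : F.IsWellOrderContinuous := ⟨hcont⟩
  have hbot : T.llp (c.ι.app ⊥) := fun _ _ p hp =>
    HasLiftingProperty.transfiniteComposition.hasLiftingProperty_ι_app_bot hc (p := p)
      (fun b hb => pushouts_le_llp h _ (hsucc b hb) p hp)
  exact (T.llp.arrow_mk_iso_iff (Arrow.isoMk e e'.symm (by simp))).2 hbot

section Monoidal

variable [MonoidalCategory C]

noncomputable def tensorInitialIsInitial [HasInitial C] [MonoidalClosed C] (X : C) :
    IsInitial (X ⊗ ⊥_ C) :=
  initialIsInitial.isInitialObj (tensorLeft X) (⊥_ C)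

lemma acof_whiskerRight [HasPushouts C] [HasInitial C] [MonoidalClosed C] (M : ModelStruct C)
    (hpp : PushoutProductAxiom M) {X Y Z : C} {g : X ⟶ Y} (hg : acof M g)
    (hZ : M.Cof (initial.to Z)) : acof M (g ▷ Z) := by
  have := isIso_of_isInitial (tensorInitialIsInitial X) (tensorInitialIsInitial Y) (g ▷ ⊥_ C)
  have po : IsPushout (X ◁ initial.to Z) (g ▷ ⊥_ C) (𝟙 _) ((tensorInitialIsInitial Y).to _) :=
    .of_vert_isIso ⟨(tensorInitialIsInitial X).hom_ext _ _⟩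
  obtain ⟨hcof, hW, -⟩ := hpp g (initial.to Z) hg.1 hZ
  refine acof_of_arrowIso M (Arrow.isoMk po.isoPushout (Iso.refl _) ?_) ⟨hcof, hW hg.2⟩
  have hinl := po.inl_isoPushout_hom
  rw [Category.id_comp] at hinl
  simpa [hinl, ppt] using pushout.inl_desc _ _ _

lemma smashAll_acof_le_llp_fib [HasPushouts C] [HasInitial C] [MonoidalClosed C]
    (M : ModelStruct C) (hpp : PushoutProductAxiom M) (hcof : ∀ X : C, M.Cof (initial.to X)) :
    smashAll (acof M) ≤ M.Fib.llp := by
  rintro _ _ _ ⟨X, Y, Z, g, hg, eA, eB, rfl⟩ _ _ p hp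
  have hac : acof M (eA.inv ≫ g ▷ Z ≫ eB.hom) :=
    acof_of_arrowIso M (Arrow.isoMk eA.symm eB.symm (by simp))
      (acof_whiskerRight M hpp hg (hcof Z))
  exact M.lift_ac_f _ p hac.1 hac.2 hp

end Monoidal

theorem statement3_general {C : Type u} [Category.{v} C] [HasColimits C]
    [MonoidalCategory C] [MonoidalClosed C]
    (M : ModelStruct C) (hpp : PushoutProductAxiom M)
    (hcof : ∀ X : C, M.Cof (initial.to X)) :
    MonoidAxiom M := fun f hf =>
  (acof_of_llp_fib M f (cofReg_le_llp (smashAll_acof_le_llp_fib M hpp hcof) f hf)).2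

/-- in a monoidal model category in which every object is cofibrant,
the monoid axiom is a consequence of the pushout product axiom. -/
theorem statement3 {C : Type u} [Category.{v} C] [HasLimits C] [HasColimits C]
    [HasInitial C] [MonoidalCategory C] [SymmetricCategory C] [MonoidalClosed C]
    (M : ModelStruct C) (hpp : PushoutProductAxiom M)
    (hcof : ∀ X : C, M.Cof (initial.to X)) :
    MonoidAxiom M :=
  statement3_general M hpp hcof

end Paper
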